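/- arXiv:1801.03372 — 3 statements merged into one kernel-verified Lean document; each statement's English description precedes it below -/
import Mathlib

section
/- Let S be a nonempty set of nonnegative real numbers, let λ₀ ≥ 0, set μ := (1 + λ₀)⁻¹, and let T := { (1 + s)⁻¹ : s ∈ S }. Suppose d is a real number with dist(μ, T) ≤ d < μ. Then dist(λ₀, S) ≤ dist(μ, T) · (μ − d)⁻². -/
/-- Transferring a distance bound for the "resolvent-transformed" set
`T = {(1+s)⁻¹ : s ∈ S}` at the point `μ = (1+λ₀)⁻¹` into a distance bound for `S` at `λ₀`. -/
theorem dist_transfer_resolvent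
    (S : Set ℝ) (hS : S.Nonempty) (hS0 : ∀ s ∈ S, 0 ≤ s)
    (lam0 : ℝ) (hlam0 : 0 ≤ lam0) (μ : ℝ) (hμ : μ = (1 + lam0)⁻¹)
    (T : Set ℝ) (hT : T = (fun s : ℝ => (1 + s)⁻¹) '' S)
    (d : ℝ) (hd1 : Metric.infDist μ T ≤ d) (hd2 : d < μ) :
    Metric.infDist lam0 S ≤ Metric.infDist μ T * ((μ - d) ^ 2)⁻¹ := by
  have hμpos : 0 < μ := by rw [hμ]; positivity
  set D := Metric.infDist μ T with hD
  have hDnonneg : 0 ≤ D := Metric.infDist_nonneg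
  have hd0 : 0 ≤ d := hDnonneg.trans hd1
  have hmd : 0 < μ - d := by linarith
  have hTne : T.Nonempty := by
    rw [hT]; exact hS.image _
  have key : Metric.infDist lam0 S ≤ D / (μ * (μ - d)) := by
    have hc : ContinuousAt (fun δ : ℝ => (D + δ) / (μ * (μ - d - δ))) 0 := by
      apply ContinuousAt.div
      · fun_prop
      · fun_prop
      · simp only [sub_zero]
        positivity
    have htend : Filter.Tendsto (fun δ : ℝ => (D + δ) / (μ * (μ - d - δ)))
        (nhdsWithin 0 (Set.Ioi 0)) (nhds (D / (μ * (μ - d)))) := by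
      have h1 : Filter.Tendsto (fun δ : ℝ => (D + δ) / (μ * (μ - d - δ)))
          (nhdsWithin (0:ℝ) (Set.Ioi 0)) (nhds ((D + 0) / (μ * (μ - d - 0)))) :=
        hc.tendsto.mono_left nhdsWithin_le_nhds
      simpa using h1
    have hev : ∀ᶠ δ in nhdsWithin (0 : ℝ) (Set.Ioi 0),
        Metric.infDist lam0 S ≤ (D + δ) / (μ * (μ - d - δ)) := by
      filter_upwards [Ioo_mem_nhdsGT_of_mem ⟨le_refl (0 : ℝ), hmd⟩] with δ hδ
      obtain ⟨hδ0, hδmd⟩ := hδ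
      obtain ⟨t, htT, hdistt⟩ := (Metric.infDist_lt_iff hTne).1
        (by linarith : D < D + δ)
      rw [hT] at htT
      obtain ⟨s, hsS, rfl⟩ := htT
      have hs0 : 0 ≤ s := hS0 s hsS
      have hs1 : 0 < 1 + s := by linarith
      set t : ℝ := (1 + s)⁻¹ with ht
      have htpos : 0 < t := by positivity
      have habs : dist μ t = |μ - t| := by rw [Real.dist_eq]
      have hmt : μ - t < D + δ := by
        have := le_abs_self (μ - t)
        rw [habs] at hdistt
        linarith
      have htlow : μ - d - δ < t := by linarith
      have hdenpos : 0 < μ - d - δ := by linarith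
      have hls : dist lam0 s = |μ - t| / (μ * t) := by
        have hlam : lam0 = μ⁻¹ - 1 := by
          rw [hμ, inv_inv]; ring
        have hsval : s = t⁻¹ - 1 := by
          rw [ht, inv_inv]; ring
        rw [Real.dist_eq, hlam, hsval,
          show μ⁻¹ - 1 - (t⁻¹ - 1) = (t - μ) / (μ * t) by
            rw [eq_div_iff (by positivity : (μ * t) ≠ 0)]; field_simp; ring,
          abs_div, abs_of_pos (by positivity : (0:ℝ) < μ * t), abs_sub_comm]
      calc Metric.infDist lam0 S ≤ dist lam0 s :=
            Metric.infDist_le_dist_of_mem hsS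
        _ = |μ - t| / (μ * t) := hls
        _ ≤ (D + δ) / (μ * (μ - d - δ)) := by
            apply div_le_div₀ (by positivity)
            · rw [← habs]; linarith
            · positivity
            · apply mul_le_mul_of_nonneg_left (le_of_lt htlow) (le_of_lt hμpos)
    exact ge_of_tendsto htend hev
  calc Metric.infDist lam0 S ≤ D / (μ * (μ - d)) := key
    _ ≤ D * ((μ - d) ^ 2)⁻¹ := by
        rw [div_eq_mul_inv]
        apply mul_le_mul_of_nonneg_left _ hDnonneg
        apply inv_anti₀ (by positivity)
        nlinarith
end

section
/- Let λ > 0, a₂ > 0, a_hom > 0, R > 0 and β < 0 be real numbers, and set k := √(λ/a₂) and κ := √(−β/a_hom). Then the following are equivalent: (1) there exists α ∈ ℝ such that sin(kR) = α·exp(−κR) and √(λ·a₂)·cos(kR) − (a₂/R)·sin(kR) = −α·a_hom·(κ + 1/R)·exp(−κR); (2) sin(kR) ≠ 0 and cos(kR)/sin(kR) + (a_hom − a₂)/(√(λ·a₂)·R) = −√(a_hom·(−β)/(λ·a₂)). -/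
/-!
The continuity condition determines `α = sin(kR) · exp(κR)` uniquely, and substituting it turns the
flux condition into a linear relation between `sin(kR)` and `cos(kR)`. That relation forces
`sin(kR) ≠ 0` (otherwise `cos(kR)` would vanish as well), and dividing it by `√(λ a₂) · sin(kR)`
gives (6.8), once `√(a_hom (-β) / (λ a₂))` is recognised as `a_hom κ / √(λ a₂)`.
-/

theorem exists_eq_mul_and_iff {K : Type*} [Field K] {E : K} (hE : E ≠ 0) (s : K) (P : K → Prop) :
    (∃ α, s = α * E ∧ P α) ↔ P (s / E) := by
  simp [← div_eq_iff hE]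

theorem Real.sqrt_mul_eq_mul_sqrt_div {a : ℝ} (ha : 0 ≤ a) (b : ℝ) :
    √(a * b) = a * √(b / a) := by
  rcases ha.eq_or_lt with rfl | ha
  · simp
  · rw [← Real.sqrt_sq ha.le, ← Real.sqrt_mul (sq_nonneg a), Real.sqrt_sq ha.le]
    congr 1
    field_simp

theorem flux_condition_iff_cot_condition {s c S R a2 ahom κ : ℝ} (hsc : s = 0 → c ≠ 0)
    (hS : S ≠ 0) (hR : R ≠ 0) :
    S * c - a2 / R * s = -(ahom * (κ + 1 / R)) * s ↔
      s ≠ 0 ∧ c / s + (ahom - a2) / (S * R) = -(ahom * κ / S) := by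
  by_cases hs : s = 0
  · simp [hs, hS, hsc hs]
  · simp only [ne_eq, hs, not_false_eq_true, true_and]
    field_simp
    constructor <;> intro h <;> linarith

theorem interface_system_solvability_iff_general
    (lam a2 ahom R β : ℝ) (hlam : 0 < lam) (ha2 : 0 < a2) (hahom : 0 < ahom)
    (hR : 0 < R)
    (k κ : ℝ) (hκ : κ = Real.sqrt (-β / ahom)) :
    (∃ α : ℝ,
        Real.sin (k * R) = α * Real.exp (-κ * R) ∧
        Real.sqrt (lam * a2) * Real.cos (k * R) - (a2 / R) * Real.sin (k * R) =
          -α * ahom * (κ + 1 / R) * Real.exp (-κ * R)) ↔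
    (Real.sin (k * R) ≠ 0 ∧
        Real.cos (k * R) / Real.sin (k * R) + (ahom - a2) / (Real.sqrt (lam * a2) * R) =
          -Real.sqrt (ahom * (-β) / (lam * a2))) := by
  have hS : Real.sqrt (lam * a2) ≠ 0 := (Real.sqrt_pos.2 (by positivity)).ne'
  have hE : Real.exp (-κ * R) ≠ 0 := (Real.exp_pos _).ne'
  have hsc : Real.sin (k * R) = 0 → Real.cos (k * R) ≠ 0 := fun hs hc => by
    simpa [hs, hc] using Real.sin_sq_add_cos_sq (k * R)
  have hsqrt : Real.sqrt (ahom * (-β) / (lam * a2)) = ahom * κ / Real.sqrt (lam * a2) := by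
    rw [Real.sqrt_div' _ (by positivity), Real.sqrt_mul_eq_mul_sqrt_div hahom.le, hκ]
  rw [exists_eq_mul_and_iff hE, hsqrt, ← flux_condition_iff_cot_condition hsc hS hR.ne']
  field_simp

/-- Solvability condition for the interface system for a spherical defect:
the system (6.6)-(6.7) has a solution `α` iff the matching condition (6.8) holds. -/
theorem interface_system_solvability_iff
    (lam a2 ahom R β : ℝ) (hlam : 0 < lam) (ha2 : 0 < a2) (hahom : 0 < ahom)
    (hR : 0 < R) (hβ : β < 0)
    (k κ : ℝ) (hk : k = Real.sqrt (lam / a2)) (hκ : κ = Real.sqrt (-β / ahom)) :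
    (∃ α : ℝ,
        Real.sin (k * R) = α * Real.exp (-κ * R) ∧
        Real.sqrt (lam * a2) * Real.cos (k * R) - (a2 / R) * Real.sin (k * R) =
          -α * ahom * (κ + 1 / R) * Real.exp (-κ * R)) ↔
    (Real.sin (k * R) ≠ 0 ∧
        Real.cos (k * R) / Real.sin (k * R) + (ahom - a2) / (Real.sqrt (lam * a2) * R) =
          -Real.sqrt (ahom * (-β) / (lam * a2))) :=
  interface_system_solvability_iff_general lam a2 ahom R β hlam ha2 hahom hR k κ hκ
end

section
/- Let λ > 0, a₂ > 0, a_hom > 0 and β < 0 be real numbers, and set k := √(λ/a₂). Then the set { R > 0 : sin(kR) ≠ 0 and cos(kR)/sin(kR) + (a_hom − a₂)/(√(λ·a₂)·R) = −√(a_hom·(−β)/(λ·a₂)) } is infinite. -/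
/-- Varying the defect radius `R > 0`, the matching condition (6.8) has
infinitely many solutions for any `λ` in a gap (`β(λ) < 0`). -/
theorem infinitely_many_radii
    (lam a2 ahom β : ℝ) (hlam : 0 < lam) (ha2 : 0 < a2) (hahom : 0 < ahom)
    (hβ : β < 0) (k : ℝ) (hk : k = Real.sqrt (lam / a2)) :
    {R : ℝ | 0 < R ∧ Real.sin (k * R) ≠ 0 ∧
        Real.cos (k * R) / Real.sin (k * R) + (ahom - a2) / (Real.sqrt (lam * a2) * R) =
          -Real.sqrt (ahom * (-β) / (lam * a2))}.Infinite := by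
  set m := Real.sqrt (ahom * (-β) / (lam * a2)) with hm
  have hk0 : 0 < k := by
    rw [hk]; exact Real.sqrt_pos.2 (div_pos hlam ha2)
  have hs : 0 < Real.sqrt (lam * a2) := Real.sqrt_pos.2 (by positivity)
  set c : ℝ := (ahom - a2) / Real.sqrt (lam * a2) with hc
  set h : ℝ → ℝ := fun R => Real.cos (k * R) + Real.sin (k * R) * (c / R + m) with hh
  apply Set.infinite_of_not_bddAbove
  rintro ⟨b, hb⟩
  obtain ⟨j, hj⟩ := exists_nat_gt (b * k / (2 * Real.pi))
  set a : ℝ := ((j : ℝ) + 1) * (2 * Real.pi) / k with ha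
  set r : ℝ := (((j : ℝ) + 1) * (2 * Real.pi) + Real.pi) / k with hr
  have hpi := Real.pi_pos
  have ha0 : 0 < a := by rw [ha]; positivity
  have hab : b < a := by
    rw [ha, lt_div_iff₀ hk0]
    have h1 : b * k / (2 * Real.pi) < (j : ℝ) + 1 := lt_of_lt_of_le hj (by linarith)
    calc b * k = b * k / (2 * Real.pi) * (2 * Real.pi) := by field_simp
    _ < ((j : ℝ) + 1) * (2 * Real.pi) := mul_lt_mul_of_pos_right h1 (by positivity)
  have har : a ≤ r := by rw [ha, hr]; gcongr; linarith
  -- values at endpoints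
  have hka : k * a = ((j : ℝ) + 1) * (2 * Real.pi) := by
    rw [ha]; field_simp
  have hkr : k * r = ((j : ℝ) + 1) * (2 * Real.pi) + Real.pi := by
    rw [hr]; field_simp
  have hcosa : Real.cos (k * a) = 1 := by
    rw [hka]
    have := Real.cos_nat_mul_two_pi (j + 1)
    push_cast at this ⊢
    convert this using 2
  have hsina : Real.sin (k * a) = 0 := by
    rw [hka]
    have := Real.sin_nat_mul_pi (2 * (j + 1))
    have e : ((2 * (j + 1) : ℕ) : ℝ) * Real.pi = ((j : ℝ) + 1) * (2 * Real.pi) := by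
      push_cast; ring
    rwa [e] at this
  have hcosr : Real.cos (k * r) = -1 := by
    rw [hkr, Real.cos_add_pi, ← hka, hcosa]
  have hsinr : Real.sin (k * r) = 0 := by
    rw [hkr, Real.sin_add_pi, ← hka, hsina, neg_zero]
  have hha : h a = 1 := by simp [hh, hcosa, hsina]
  have hhr : h r = -1 := by simp [hh, hcosr, hsinr]
  -- continuity on [a, r]
  have hcont : ContinuousOn h (Set.Icc a r) := by
    apply ContinuousOn.add
    · exact (Real.continuous_cos.comp (continuous_const.mul continuous_id)).continuousOn
    · apply ContinuousOn.mul
      · exact (Real.continuous_sin.comp (continuous_const.mul continuous_id)).continuousOn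
      · apply ContinuousOn.add
        · exact ContinuousOn.div continuousOn_const continuousOn_id
            (fun x hx => ne_of_gt (lt_of_lt_of_le ha0 hx.1))
        · exact continuousOn_const
  -- IVT
  have h0 : (0 : ℝ) ∈ Set.Icc (h r) (h a) := by
    rw [hha, hhr]; constructor <;> norm_num
  obtain ⟨R, hRmem, hR0⟩ := intermediate_value_Icc' har hcont h0
  have hRa : a ≤ R := hRmem.1
  have hRpos : 0 < R := lt_of_lt_of_le ha0 hRa
  have hsin : Real.sin (k * R) ≠ 0 := by
    intro hz
    rw [hh] at hR0
    simp only [hz, zero_mul, add_zero] at hR0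
    have := Real.sin_sq_add_cos_sq (k * R)
    rw [hz, hR0] at this
    norm_num at this
  have hcosR : Real.cos (k * R) = -(Real.sin (k * R) * (c / R + m)) := by
    have := hR0
    rw [hh] at this
    linarith [this]
  have heq : Real.cos (k * R) / Real.sin (k * R) +
      (ahom - a2) / (Real.sqrt (lam * a2) * R) = -m := by
    rw [hcosR]
    have e : (ahom - a2) / (Real.sqrt (lam * a2) * R) = c / R := by
      rw [hc, div_div]
    rw [e]
    field_simp
    ring
  exact absurd (hb ⟨hRpos, hsin, heq⟩) (not_le.2 (lt_of_lt_of_le hab hRa))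
end
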